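/- Let λ, μ be positive real numbers. The multiset {0, λ, λ, μ} is Laplacian realizable for the cycle C₄ if and only if μ ≥ 2λ. -/

import Mathlib

open Matrix

/-- `A` is a generalized Laplacian matrix for the graph `G`. -/
def IsGenLap {n : ℕ} (G : SimpleGraph (Fin n)) (A : Matrix (Fin n) (Fin n) ℝ) : Prop :=
  A.IsSymm ∧
  (∀ i j, G.Adj i j → A i j < 0) ∧
  (∀ i j, i ≠ j → ¬ G.Adj i j → A i j = 0) ∧
  (∀ i, ∑ j, A i j = 0)

/-- The cycle `C₄` on 4 vertices. -/
def cycleGraph4 : SimpleGraph (Fin 4) :=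
  SimpleGraph.fromEdgeSet {s(0, 1), s(1, 2), s(2, 3), s(3, 0)}

open Polynomial

set_option maxHeartbeats 1000000

theorem myDetFinFour {R : Type*} [CommRing R] (A : Matrix (Fin 4) (Fin 4) R) :
    det A =
      A 0 0 * (A 1 1 * (A 2 2 * A 3 3 - A 2 3 * A 3 2)
             - A 1 2 * (A 2 1 * A 3 3 - A 2 3 * A 3 1)
             + A 1 3 * (A 2 1 * A 3 2 - A 2 2 * A 3 1))
    - A 0 1 * (A 1 0 * (A 2 2 * A 3 3 - A 2 3 * A 3 2)
             - A 1 2 * (A 2 0 * A 3 3 - A 2 3 * A 3 0)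
             + A 1 3 * (A 2 0 * A 3 2 - A 2 2 * A 3 0))
    + A 0 2 * (A 1 0 * (A 2 1 * A 3 3 - A 2 3 * A 3 1)
             - A 1 1 * (A 2 0 * A 3 3 - A 2 3 * A 3 0)
             + A 1 3 * (A 2 0 * A 3 1 - A 2 1 * A 3 0))
    - A 0 3 * (A 1 0 * (A 2 1 * A 3 2 - A 2 2 * A 3 1)
             - A 1 1 * (A 2 0 * A 3 2 - A 2 2 * A 3 0)
             + A 1 2 * (A 2 0 * A 3 1 - A 2 1 * A 3 0)) := by
  rw [Matrix.det_succ_row_zero]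
  simp +decide [Fin.sum_univ_succ, Matrix.det_fin_three, Fin.succAbove, Matrix.submatrix_apply,
    show ((2:Fin 3).succ = 3) from rfl, show (Fin.castSucc (2:Fin 3) = 2) from rfl]
  ring

theorem myCharpolyFinFour (M : Matrix (Fin 4) (Fin 4) ℝ) :
    M.charpoly = (!![X - C (M 0 0), -C (M 0 1), -C (M 0 2), -C (M 0 3);
                    -C (M 1 0), X - C (M 1 1), -C (M 1 2), -C (M 1 3);
                    -C (M 2 0), -C (M 2 1), X - C (M 2 2), -C (M 2 3);
                    -C (M 3 0), -C (M 3 1), -C (M 3 2), X - C (M 3 3)] : Matrix (Fin 4) (Fin 4) ℝ[X]).det := by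
  rw [Matrix.charpoly]
  congr 1
  ext i j
  fin_cases i <;> fin_cases j <;>
    simp [charmatrix_apply_eq, charmatrix_apply_ne]

theorem myRootsLemma (lam mu : ℝ) :
    (X * (X - C lam)^2 * (X - C mu)).roots = (0 ::ₘ lam ::ₘ lam ::ₘ {mu}) := by
  have h1 : (X : ℝ[X]) ≠ 0 := X_ne_zero
  have h2 : ((X - C lam : ℝ[X]))^2 ≠ 0 := pow_ne_zero _ (X_sub_C_ne_zero lam)
  have h3 : ((X - C mu : ℝ[X])) ≠ 0 := X_sub_C_ne_zero mu
  rw [roots_mul (mul_ne_zero (mul_ne_zero h1 h2) h3), roots_mul (mul_ne_zero h1 h2),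
    roots_X, roots_pow, roots_X_sub_C, roots_X_sub_C]
  rfl

/-- The key real inequality. -/
theorem myKey (L p q s2 t2 : ℝ) (hL : 0 < L) (hp : 0 < p) (hq : 0 < q)
    (hs2 : 0 < s2) (ht2 : 0 < t2) (hpq : p ≤ q)
    (hds : 4*s2 ≤ p^2) (hdt : 4*t2 ≤ q^2)
    (hA : 3*p*q + 4*s2 + 4*t2 = 4*L*(p+q) - 3*L^2)
    (hB : 2*(q*s2 + p*t2) = L^2*(p+q) - L^3) :
    2*L ≤ p + q := by
  by_contra hcon
  push_neg at hcon
  have hG1 : 4*s2*(q-p) = 2*(L^2*(p+q) - L^3) - p*(4*L*(p+q) - 3*L^2 - 3*p*q) := by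
    linear_combination 2*hB - p*hA
  have hI1 : (p^2 - 4*s2)*(q-p) = -((p-L)^2*(p+2*q-2*L)) := by
    linear_combination p*hA - 2*hB
  have hI2 : (q^2 - 4*t2)*(q-p) = (q-L)^2*(q+2*p-2*L) := by
    linear_combination 2*hB - q*hA
  rcases eq_or_lt_of_le hpq with heq | hlt
  · subst heq
    have h0 : (p-L)^2*(3*p-2*L) = 0 := by linear_combination hI1
    rcases mul_eq_zero.mp h0 with h | h
    · have : p = L := by
        have := pow_eq_zero_iff (n := 2) (by norm_num) |>.mp h
        linarith [sub_eq_zero.mp this]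
      linarith
    · nlinarith [hds, hdt, hA, mul_pos hp hp]
  · have hpL : p < L := by linarith
    have lhs1 : 0 ≤ (p^2 - 4*s2)*(q-p) := mul_nonneg (by linarith) (by linarith)
    have h2q : p + 2*q - 2*L ≤ 0 := by
      have hsq : 0 < (p-L)^2 := sq_pos_of_ne_zero (by intro h; linarith [sub_eq_zero.mp h])
      nlinarith [hI1, lhs1, hsq]
    rcases eq_or_ne q L with hqL | hqL
    · subst hqL
      have hs2eq : 4*s2*(q-p) = p*q*(q-p) := by linear_combination hG1
      have h4 : 4*s2 = p*q := by
        have hne : q - p ≠ 0 := by linarith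
        field_simp at hs2eq
        linarith
      nlinarith [hds, h4, hp]
    · have lhs2 : 0 ≤ (q^2 - 4*t2)*(q-p) := mul_nonneg (by linarith) (by linarith)
      have hsq2 : 0 < (q-L)^2 := sq_pos_of_ne_zero (sub_ne_zero.mpr hqL)
      have h2p : 0 ≤ q + 2*p - 2*L := by nlinarith [hI2, lhs2, hsq2]
      linarith

/-- For `λ, μ > 0`, the multiset `{0, λ, λ, μ}` is Laplacian realizable for `C₄`
if and only if `μ ≥ 2λ`. -/
theorem stmt16 (lam mu : ℝ) (hlam : 0 < lam) (hmu : 0 < mu) :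
    (∃ A : Matrix (Fin 4) (Fin 4) ℝ, IsGenLap cycleGraph4 A ∧
        A.charpoly.roots = (0 ::ₘ lam ::ₘ lam ::ₘ {mu})) ↔ 2 * lam ≤ mu := by
  have adj01 : cycleGraph4.Adj 0 1 := by
    rw [cycleGraph4, SimpleGraph.fromEdgeSet_adj]; exact ⟨by simp, by decide⟩
  have adj12 : cycleGraph4.Adj 1 2 := by
    rw [cycleGraph4, SimpleGraph.fromEdgeSet_adj]; exact ⟨by simp, by decide⟩
  have adj23 : cycleGraph4.Adj 2 3 := by
    rw [cycleGraph4, SimpleGraph.fromEdgeSet_adj]; exact ⟨by simp, by decide⟩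
  have adj03 : cycleGraph4.Adj 0 3 := by
    rw [cycleGraph4, SimpleGraph.fromEdgeSet_adj]; exact ⟨by simp [Sym2.eq_swap], by decide⟩
  have nadj02 : ¬ cycleGraph4.Adj 0 2 := by
    rw [cycleGraph4, SimpleGraph.fromEdgeSet_adj]; simp +decide [Sym2.eq_iff]
  have nadj13 : ¬ cycleGraph4.Adj 1 3 := by
    rw [cycleGraph4, SimpleGraph.fromEdgeSet_adj]; simp +decide [Sym2.eq_iff]
  constructor
  · rintro ⟨A, ⟨hsym, hneg, hzero, hrow⟩, hroots⟩
    obtain ⟨a, ha, n01⟩ : ∃ a, 0 < a ∧ A 0 1 = -a :=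
      ⟨-(A 0 1), by linarith [hneg 0 1 adj01], by ring⟩
    obtain ⟨b, hb, n12⟩ : ∃ b, 0 < b ∧ A 1 2 = -b :=
      ⟨-(A 1 2), by linarith [hneg 1 2 adj12], by ring⟩
    obtain ⟨c, hc, n23⟩ : ∃ c, 0 < c ∧ A 2 3 = -c :=
      ⟨-(A 2 3), by linarith [hneg 2 3 adj23], by ring⟩
    obtain ⟨d, hd, n03⟩ : ∃ d, 0 < d ∧ A 0 3 = -d :=
      ⟨-(A 0 3), by linarith [hneg 0 3 adj03], by ring⟩
    have n02 : A 0 2 = 0 := hzero 0 2 (by decide) nadj02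
    have n13 : A 1 3 = 0 := hzero 1 3 (by decide) nadj13
    have n10 : A 1 0 = -a := (hsym.apply 0 1).trans n01
    have n21 : A 2 1 = -b := (hsym.apply 1 2).trans n12
    have n32 : A 3 2 = -c := (hsym.apply 2 3).trans n23
    have n30 : A 3 0 = -d := (hsym.apply 0 3).trans n03
    have n20 : A 2 0 = 0 := (hsym.apply 0 2).trans n02
    have n31 : A 3 1 = 0 := (hsym.apply 1 3).trans n13
    have n00 : A 0 0 = a + d := by
      have h := hrow 0; rw [Fin.sum_univ_four] at h
      rw [n01, n02, n03] at h; linarith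
    have n11 : A 1 1 = a + b := by
      have h := hrow 1; rw [Fin.sum_univ_four] at h
      rw [n10, n12, n13] at h; linarith
    have n22 : A 2 2 = b + c := by
      have h := hrow 2; rw [Fin.sum_univ_four] at h
      rw [n20, n21, n23] at h; linarith
    have n33 : A 3 3 = c + d := by
      have h := hrow 3; rw [Fin.sum_univ_four] at h
      rw [n30, n31, n32] at h; linarith
    have hchar := myCharpolyFinFour A
    rw [n00, n01, n02, n03, n10, n11, n12, n13, n20, n21, n22, n23, n30, n31, n32, n33] at hchar
    rw [myDetFinFour] at hchar
    simp only [Matrix.of_apply, Matrix.cons_val', Matrix.cons_val_zero, Matrix.cons_val_one,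
      Matrix.head_cons, Matrix.empty_val', Matrix.cons_val_fin_one, Matrix.head_fin_const,
      Matrix.cons_val_two, Matrix.cons_val_three, Matrix.vecTail, Matrix.vecHead,
      Function.comp_apply, Fin.succ_zero_eq_one, Fin.succ_one_eq_two] at hchar
    have hcard : A.charpoly.roots.card = A.charpoly.natDegree := by
      rw [hroots, Matrix.charpoly_natDegree_eq_dim]
      simp
    have hsplit := Polynomial.prod_multiset_X_sub_C_of_monic_of_roots_card_eq
      (Matrix.charpoly_monic A) hcard
    rw [hroots] at hsplit
    simp only [Multiset.map_cons, Multiset.map_singleton, Multiset.prod_cons,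
      Multiset.prod_singleton] at hsplit
    have hfull := hsplit.trans hchar
    have h1 := congrArg (Polynomial.eval (1:ℝ)) hfull
    have h2 := congrArg (Polynomial.eval (-1:ℝ)) hfull
    have h3 := congrArg (Polynomial.eval (2:ℝ)) hfull
    have h4 := congrArg (Polynomial.eval (-2:ℝ)) hfull
    simp only [eval_mul, eval_sub, eval_add, eval_neg, eval_pow, eval_C, eval_X,
      eval_zero, eval_one, eval_ofNat] at h1 h2 h3 h4
    have E1 : 2*(a+b+c+d) = 2*lam + mu := by
      linear_combination (-1/6)*h1 + (1/6)*h2 + (1/12)*h3 - (1/12)*h4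
    have E2 : 3*(a*b+b*c+c*d+d*a) + 4*(a*c+b*d) = lam^2 + 2*(lam*mu) := by
      linear_combination (1/6)*h1 + (1/6)*h2 - (1/6)*h3 - (1/6)*h4
    have E3 : 4*(a*b*c+a*b*d+a*c*d+b*c*d) = lam^2*mu := by
      linear_combination (2/3)*h1 - (2/3)*h2 - (1/12)*h3 + (1/12)*h4
    have hA1 : 3*(a+c)*(b+d) + 4*(a*c) + 4*(b*d) = 4*lam*((a+c)+(b+d)) - 3*lam^2 := by
      linear_combination E2 - 2*lam*E1
    have hB1 : 2*((b+d)*(a*c) + (a+c)*(b*d)) = lam^2*((a+c)+(b+d)) - lam^3 := by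
      linear_combination (1/2)*E3 - (lam^2/2)*E1
    clear hchar hcard hsplit hfull h1 h2 h3 h4 hroots E2 E3
    rcases le_total (a+c) (b+d) with hle | hle
    · have hk := myKey lam (a+c) (b+d) (a*c) (b*d) hlam (by linarith) (by linarith)
        (mul_pos ha hc) (mul_pos hb hd) hle (by nlinarith [sq_nonneg (a-c)])
        (by nlinarith [sq_nonneg (b-d)]) (by linear_combination hA1) (by linear_combination hB1)
      linarith
    · have hk := myKey lam (b+d) (a+c) (b*d) (a*c) hlam (by linarith) (by linarith)
        (mul_pos hb hd) (mul_pos ha hc) hle (by nlinarith [sq_nonneg (b-d)])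
        (by nlinarith [sq_nonneg (a-c)]) (by linear_combination hA1) (by linear_combination hB1)
      linarith
  · intro hge
    set u := Real.sqrt (mu*(mu - 2*lam)) with hu_def
    have hu2 : u^2 = mu*(mu-2*lam) := Real.sq_sqrt (by nlinarith)
    have hu0 : 0 ≤ u := Real.sqrt_nonneg _
    have hum : u < mu := by nlinarith [mul_pos hlam hmu]
    obtain ⟨x, hx, hxval⟩ : ∃ x, 0 < x ∧ x = (mu+u)/4 := ⟨(mu+u)/4, by linarith, rfl⟩
    obtain ⟨y, hy, hyval⟩ : ∃ y, 0 < y ∧ y = lam/2 := ⟨lam/2, by linarith, rfl⟩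
    obtain ⟨z, hz, hzval⟩ : ∃ z, 0 < z ∧ z = (mu-u)/4 := ⟨(mu-u)/4, by linarith, rfl⟩
    have hrel : 2*x*z = y*(x+z) := by
      rw [hxval, hyval, hzval]
      linear_combination (-(1:ℝ)/8)*hu2
    have hlam2 : lam = 2*y := by rw [hyval]; ring
    have hmu2 : mu = 2*(x+z) := by rw [hxval, hzval]; ring
    refine ⟨!![x+y, -x, 0, -y;
               -x, x+y, -y, 0;
               0, -y, z+y, -z;
               -y, 0, -z, z+y], ⟨?_, ?_, ?_, ?_⟩, ?_⟩
    · apply Matrix.IsSymm.ext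
      intro i j
      fin_cases i <;> fin_cases j <;> simp
    · intro i j hadj
      fin_cases i <;> fin_cases j <;>
        first
          | (simp; linarith)
          | (rw [cycleGraph4, SimpleGraph.fromEdgeSet_adj] at hadj;
             simp +decide [Sym2.eq_iff] at hadj)
    · intro i j hne hnadj
      fin_cases i <;> fin_cases j <;>
        first
          | (exact absurd rfl hne)
          | (exact absurd adj01 hnadj) | (exact absurd adj12 hnadj)
          | (exact absurd adj23 hnadj) | (exact absurd adj03 hnadj)
          | (exact absurd adj01.symm hnadj) | (exact absurd adj12.symm hnadj)
          | (exact absurd adj23.symm hnadj) | (exact absurd adj03.symm hnadj)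
          | simp
    · intro i
      fin_cases i <;> rw [Fin.sum_univ_four] <;> simp <;> ring
    · have hC : (2 : ℝ[X]) * C x * C z = C y * (C x + C z) := by
        have := congrArg (Polynomial.C : ℝ →+* ℝ[X]) hrel
        simp only [_root_.map_mul, _root_.map_add, map_ofNat] at this
        exact this
      have hcp : (!![x+y, -x, 0, -y;
               -x, x+y, -y, 0;
               0, -y, z+y, -z;
               -y, 0, -z, z+y] : Matrix (Fin 4) (Fin 4) ℝ).charpoly
          = X * (X - C lam)^2 * (X - C mu) := by
        rw [myCharpolyFinFour, myDetFinFour, hlam2, hmu2]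
        simp only [Matrix.of_apply, Matrix.cons_val', Matrix.cons_val_zero, Matrix.cons_val_one,
          Matrix.head_cons, Matrix.empty_val', Matrix.cons_val_fin_one, Matrix.head_fin_const,
          Matrix.cons_val_two, Matrix.cons_val_three, Matrix.vecTail, Matrix.vecHead,
          Function.comp_apply, Fin.succ_zero_eq_one, Fin.succ_one_eq_two,
          _root_.map_add, _root_.map_neg, _root_.map_mul, map_ofNat, map_zero, neg_neg, neg_zero]
        linear_combination (2 * X * (X - 2 * Polynomial.C y)) * hC
      rw [hcp]
      exact myRootsLemma lam mu
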